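/- Let u², v², w² be squares such that v² is a proper substring of u² whose occurrence starts strictly before the occurrence of the L-root interval r_{u²}, and w² is a proper substring of v² whose occurrence starts strictly before the occurrences of both r_{u²} and r_{v²}, where r_{u²} and r_{v²} are the L-root intervals of u² and v² with respect to the lexicographic order of w². If w is primitive, then |u| ≥ |v| + |w|. -/

import Mathlib

/-- `listPow x k` is the `k`-th power `xᵏ` of the string `x`. -/
def listPow {α : Type*} (x : List α) (k : ℕ) : List α := (List.replicate k x).flatten

/-- A string is primitive if it is not a proper power. -/
def IsPrimitiveWord {α : Type*} (w : List α) : Prop :=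
  ¬ ∃ (x : List α) (k : ℕ), 2 ≤ k ∧ w = listPow x k

/-- A non-empty string is a Lyndon word with respect to the lexicographic order induced
by the relation `lt` if it is lexicographically smaller than all of its non-empty
proper suffixes. -/
def IsLyndonRel {α : Type*} (lt : α → α → Prop) (w : List α) : Prop :=
  w ≠ [] ∧ ∀ s : List α, s <:+ w → s ≠ [] → s ≠ w → List.Lex lt w s

/-- `p` is a period of `w` (0-indexed): `1 ≤ p ≤ |w|` and `w[i] = w[i+p]` whenever
both are defined. -/
def IsPeriodOf {α : Type*} (w : List α) (p : ℕ) : Prop :=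
  1 ≤ p ∧ p ≤ w.length ∧ ∀ i : ℕ, i + p < w.length → w[i]? = w[i + p]?

/-- `p` is the smallest period of `w`. -/
def IsLeastPeriod {α : Type*} (w : List α) (p : ℕ) : Prop :=
  IsPeriodOf w p ∧ ∀ q : ℕ, IsPeriodOf w q → p ≤ q

/-- `seg t a b` is the substring `t[a..b)` of `t` (0-indexed, half open). -/
def seg {α : Type*} (t : List α) (a b : ℕ) : List α := (t.drop a).take (b - a)

/-- `t[i..j]` (0-indexed, inclusive) is a run with smallest period `p`: the substring
has smallest period `p` with `2p ≤ j - i + 1`, and neither the extension by one symbol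
to the left nor to the right (when they exist) has smallest period `p`. -/
def IsRun {α : Type*} (t : List α) (i j p : ℕ) : Prop :=
  i ≤ j ∧ j < t.length ∧
  IsLeastPeriod (seg t i (j + 1)) p ∧ 2 * p ≤ j + 1 - i ∧
  (i = 0 ∨ ¬ IsLeastPeriod (seg t (i - 1) (j + 1)) p) ∧
  (j + 1 = t.length ∨ ¬ IsLeastPeriod (seg t i (j + 2)) p)

/-!
The Lyndon conjugate `λ` of the primitive word `w` occurs inside the occurrence of `w²`, and
inside the run of period `|w|` every suffix is lexicographically larger than the suffix `|w|`
positions further on. An occurrence of a Lyndon word, preceded by a proper suffix of itself,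
starts the strictly smallest suffix among the positions the two cover; two such windows
containing each other's starting points therefore start at the same position. Comparing `λ`
with the L-roots of `u²` and `v²` shows that in each square `λ` either is the L-root itself, the
square then having period `|w|`, or ends before it; either way `λ` lies in the first half of the
square. So `λ` recurs `|v|` and `|u|` positions later, and if `|u| - |v| < |w|` these two copies
overlap and give `λ` a border, which a Lyndon word cannot have.
-/

open List

section Words
variable {α : Type*}

theorem List.IsInfix.length_lt_of_ne {l₁ l₂ : List α} (h : l₁ <:+: l₂)
    (hne : l₁ ≠ l₂) : l₁.length < l₂.length :=
  lt_of_le_of_ne h.length_le fun e => hne (h.eq_of_length e)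

theorem length_lt_of_append_self_eq {x y A B : List α} (h : x ++ x = A ++ (y ++ y) ++ B)
    (hne : y ++ y ≠ x ++ x) : y.length < x.length := by
  have := (show y ++ y <:+: x ++ x from ⟨A, B, h.symm⟩).length_lt_of_ne hne
  simp at this; omega

theorem listPow_add (x : List α) (a b : ℕ) : listPow x (a + b) = listPow x a ++ listPow x b := by
  rw [listPow, listPow, listPow, ← replicate_append_replicate, flatten_append]

theorem listPow_succ (x : List α) (k : ℕ) : listPow x (k + 1) = x ++ listPow x k := by
  rw [add_comm, listPow_add]; simp [listPow]

theorem exists_listPow_of_append_comm {x y : List α} (h : x ++ y = y ++ x) :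
    ∃ z a b, x = listPow z a ∧ y = listPow z b := by
  induction hn : x.length + y.length using Nat.strong_induction_on generalizing x y with
  | _ n ih =>
  wlog hxy : x.length ≤ y.length generalizing x y
  · obtain ⟨z, a, b, hx, hy⟩ := this h.symm (by omega) (by omega)
    exact ⟨z, b, a, hy, hx⟩
  rcases eq_or_ne x [] with rfl | hx
  · exact ⟨y, 0, 1, rfl, by simp [listPow]⟩
  obtain ⟨y', rfl⟩ : x <+: y :=
    prefix_of_prefix_length_le (h ▸ prefix_append x y) (prefix_append y x) hxy
  have h' : x ++ y' = y' ++ x := by simpa using h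
  obtain ⟨z, a, b, rfl, rfl⟩ :=
    ih _ (by simp [← hn, length_pos_iff.2 hx]) h' rfl
  exact ⟨z, a, a + b, rfl, (listPow_add z a b).symm⟩

theorem not_isPrimitiveWord_of_append_comm {x y : List α} (hx : x ≠ []) (hy : y ≠ [])
    (h : x ++ y = y ++ x) : ¬ IsPrimitiveWord (x ++ y) := by
  obtain ⟨z, a, b, rfl, rfl⟩ := exists_listPow_of_append_comm h
  have ha : a ≠ 0 := by rintro rfl; exact hx rfl
  have hb : b ≠ 0 := by rintro rfl; exact hy rfl
  exact fun hprim => hprim ⟨z, a + b, by omega, (listPow_add z a b).symm⟩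

theorem IsPrimitiveWord.rotate_ne_self {w : List α} (hw : IsPrimitiveWord w) {k : ℕ}
    (hk0 : 0 < k) (hk : k < w.length) : w.rotate k ≠ w := by
  intro hrot
  rw [rotate_eq_drop_append_take hk.le] at hrot
  have hcomm : w.take k ++ w.drop k = w.drop k ++ w.take k := by
    rw [take_append_drop, hrot]
  exact not_isPrimitiveWord_of_append_comm (ne_nil_of_length_pos (by simp; omega))
    (ne_nil_of_length_pos (by simp; omega)) hcomm
    (by rwa [take_append_drop])

end Words

section Periods
variable {α : Type*}

theorem isPeriodOf_iff_hasPeriod {t : List α} {p : ℕ} :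
    IsPeriodOf t p ↔ 1 ≤ p ∧ p ≤ t.length ∧ t.HasPeriod p := by
  rw [hasPeriod_iff_getElem?]
  refine and_congr_right fun _ => and_congr_right fun _ => ?_
  exact ⟨fun h i hi => h i (by omega), fun h i hi => h i (by omega)⟩

theorem rotate_eq_self_of_hasPeriod_append_self {u : List α} {p : ℕ}
    (h : (u ++ u).HasPeriod p) (hp : p ≤ u.length) : u.rotate p = u := by
  have hpre := h.drop_prefix
  rw [drop_append_of_le_length hp] at hpre
  have hrot : u.drop p ++ u.take p <+: u ++ u :=
    ((prefix_append_right_inj _).2 (take_prefix p u)).trans hpre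
  rw [rotate_eq_drop_append_take hp]
  exact (prefix_of_prefix_length_le hrot (prefix_append u u) (by simp; omega)).eq_of_length
    (by simp; omega)

theorem IsLeastPeriod.dvd_of_isPeriodOf {t : List α} {p q : ℕ} (hp : IsLeastPeriod t p)
    (hq : IsPeriodOf t q) (hpq : p + q ≤ t.length) : p ∣ q := by
  obtain ⟨hp1, -, hpt⟩ := isPeriodOf_iff_hasPeriod.1 hp.1
  obtain ⟨hq1, -, hqt⟩ := isPeriodOf_iff_hasPeriod.1 hq
  have hgcd : IsPeriodOf t (p.gcd q) :=
    isPeriodOf_iff_hasPeriod.2 ⟨Nat.gcd_pos_of_pos_left q hp1,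
      (Nat.gcd_le_left q hp1).trans (by omega), hpt.gcd hqt (by omega)⟩
  have : p.gcd q = p := le_antisymm (Nat.gcd_le_left q hp1) (hp.2 _ hgcd)
  exact this ▸ Nat.gcd_dvd_right p q

theorem IsLeastPeriod.le_of_isInfix {f t : List α} {p q : ℕ} (hp : IsLeastPeriod f p)
    (hf : f <:+: t) (hq : IsPeriodOf t q) : p ≤ q := by
  obtain ⟨hq1, -, hqt⟩ := isPeriodOf_iff_hasPeriod.1 hq
  by_cases hqf : q ≤ f.length
  · exact hp.2 q (isPeriodOf_iff_hasPeriod.2 ⟨hq1, hqf, hqt.infix hf⟩)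
  · exact (hp.1.2.1).trans (by omega)

theorem isPeriodOf_append_self {u : List α} (hu : 0 < u.length) :
    IsPeriodOf (u ++ u) u.length :=
  isPeriodOf_iff_hasPeriod.2 ⟨hu, by simp, by simp [HasPeriod]⟩

theorem IsLeastPeriod.le_length_of_append_self {u : List α} {p : ℕ}
    (hp : IsLeastPeriod (u ++ u) p) : p ≤ u.length := by
  refine hp.2 _ (isPeriodOf_append_self ?_)
  have := hp.1.1; have := hp.1.2.1; simp at this; omega

theorem IsLeastPeriod.dvd_length_of_append_self {u : List α} {p : ℕ}
    (hp : IsLeastPeriod (u ++ u) p) : p ∣ u.length := by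
  have hle := hp.le_length_of_append_self
  have := hp.1.1
  exact hp.dvd_of_isPeriodOf (isPeriodOf_append_self (by omega)) (by simp; omega)

theorem IsPrimitiveWord.isLeastPeriod_append_self {w : List α} (hw : IsPrimitiveWord w)
    {p : ℕ} (hp : IsLeastPeriod (w ++ w) p) : p = w.length := by
  have hle := hp.le_length_of_append_self
  obtain ⟨hp1, -, hpw⟩ := isPeriodOf_iff_hasPeriod.1 hp.1
  by_contra hne
  exact hw.rotate_ne_self hp1 (by omega) (rotate_eq_self_of_hasPeriod_append_self hpw hle)

end Periods

section Lex
variable {α : Type*} {r : α → α → Prop}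

theorem List.Lex.append_append_of_not_prefix {l₁ l₂ : List α} (h : Lex r l₁ l₂)
    (hpre : ¬ l₁ <+: l₂) (t₁ t₂ : List α) : Lex r (l₁ ++ t₁) (l₂ ++ t₂) := by
  induction h with
  | nil => exact absurd nil_prefix hpre
  | cons _ ih => exact .cons (ih fun h' => hpre ((prefix_cons_inj _).2 h'))
  | rel h => exact .rel h

theorem List.lex_of_prefix_of_ne {l₁ l₂ : List α} (h : l₁ <+: l₂) (hne : l₁ ≠ l₂) :
    Lex r l₁ l₂ := by
  obtain ⟨_ | ⟨b, t⟩, rfl⟩ := h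
  · simp at hne
  · simpa using Lex.append_left r (Lex.nil (a := b) (l := t)) l₁

instance List.Lex.isStrictOrder [IsStrictOrder α r] : IsStrictOrder (List α) (Lex r) where
  irrefl := lex_irrefl irrefl
  trans _ _ _ := lex_trans (trans_of r)

end Lex

section Lyndon
variable {α : Type*} {lt : α → α → Prop}

theorem IsLyndonRel.lex_append_append {l σ : List α} (hl : IsLyndonRel lt l) (hσ : σ <:+ l)
    (hne : σ ≠ []) (hσl : σ ≠ l) (t₁ t₂ : List α) : Lex lt (l ++ t₁) (σ ++ t₂) :=
  (hl.2 σ hσ hne hσl).append_append_of_not_prefix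
    (fun h => hσl (hσ.eq_of_length (le_antisymm hσ.length_le h.length_le))) t₁ t₂

theorem IsLyndonRel.not_drop_prefix [Std.Asymm lt] {l : List α} (hl : IsLyndonRel lt l)
    {d : ℕ} (hd0 : 0 < d) (hd : d < l.length) : ¬ l.drop d <+: l := fun hpre =>
  have hdl : l.drop d ≠ l := fun h => by have := congrArg length h; simp at this; omega
  asymm (hl.2 _ (drop_suffix d l) (ne_nil_of_length_pos (by simp; omega)) hdl)
    (lex_of_prefix_of_ne hpre hdl)

theorem IsLyndonRel.not_prefix_drop_add [Std.Asymm lt] {l s : List α} (hl : IsLyndonRel lt l)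
    {p d : ℕ} (hd0 : 0 < d) (hd : d < l.length) (h : l <+: s.drop p) :
    ¬ l <+: s.drop (p + d) := fun h' =>
  hl.not_drop_prefix hd0 hd <|
    prefix_of_prefix_length_le (by simpa [add_comm] using h.drop d) h' (by simp)

theorem isLyndonRel_of_forall_not_lex_rotate [IsStrictTotalOrder α lt] {m : List α}
    (hm : m ≠ []) (hmin : ∀ k, ¬ Lex lt (m.rotate k) m)
    (hrot : ∀ k, 0 < k → k < m.length → m.rotate k ≠ m) : IsLyndonRel lt m := by
  refine ⟨hm, fun σ ⟨x, hx⟩ hσ hσm => ?_⟩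
  have hx0 : x ≠ [] := by rintro rfl; exact hσm hx
  have hrotx : m.rotate x.length = σ ++ x := by rw [← hx, rotate_append_length_eq]
  rcases trichotomous (r := Lex lt) m σ with h | rfl | h
  · exact h
  · simp at hx; exact absurd hx hx0
  -- If `m = x ++ σ = σ ++ z`, minimality against the rotations `σ ++ x` and `z ++ σ` forces
  -- `x = z`, so `m` is a nontrivial rotation of itself.
  by_cases hpre : σ <+: m
  · exfalso
    obtain ⟨z, hz⟩ := hpre
    have hlen : z.length = x.length := by
      have h1 := congrArg length hx; have h2 := congrArg length hz; simp at h1 h2; omega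
    have hxz : ¬ Lex lt x z := fun h' =>
      hmin x.length (by rw [hrotx, ← hz]; exact Lex.append_left lt h' σ)
    have hzx : ¬ Lex lt z x := fun h' => by
      apply hmin σ.length
      rw [← hz, rotate_append_length_eq, hz, ← hx]
      exact h'.append_append_of_not_prefix
        (fun hp => by rw [hp.eq_of_length hlen] at h'; exact asymm h' h') σ σ
    obtain rfl : x = z := Std.Trichotomous.trichotomous x z hxz hzx
    refine hrot x.length (length_pos_iff.2 hx0) ?_ (hrotx.trans hz)
    rw [← hx]; simp [length_pos_iff.2 hσ]
  · exact absurd (by simpa [hrotx] using h.append_append_of_not_prefix hpre x []) (hmin x.length)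

theorem IsPrimitiveWord.exists_isLyndonRel_rotate [IsStrictTotalOrder α lt] {w : List α}
    (hw : IsPrimitiveWord w) (hne : w ≠ []) : ∃ r < w.length, IsLyndonRel lt (w.rotate r) := by
  have hfin : ((w.rotate ·) '' Set.Iio w.length).Finite := (Set.finite_Iio _).image _
  obtain ⟨⟨_, r, hr, rfl⟩, -, hmin⟩ := (hfin.wellFoundedOn (r := Lex lt)).has_min Set.univ
    ⟨⟨w, 0, length_pos_iff.2 hne, rotate_zero w⟩, trivial⟩
  refine ⟨r, hr, isLyndonRel_of_forall_not_lex_rotate (by simpa using hne) (fun k h => ?_)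
    (fun k hk0 hk h => ?_)⟩
  · have hk : (w.rotate r).rotate k ∈ (w.rotate ·) '' Set.Iio w.length :=
      ⟨(r + k) % w.length, Nat.mod_lt _ (length_pos_iff.2 hne),
        by dsimp only; rw [rotate_mod, rotate_rotate]⟩
    exact hmin ⟨_, hk⟩ trivial h
  · rw [rotate_rotate, add_comm, ← rotate_rotate, rotate_eq_rotate] at h
    exact hw.rotate_ne_self hk0 (by simpa using hk) h

end Lyndon

section Suffixes
variable {α : Type*} {lt : α → α → Prop}

def IsLeastSuffixOn (lt : α → α → Prop) (s : List α) (I : Set ℕ) (c : ℕ) : Prop :=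
  ∀ x ∈ I, x ≠ c → Lex lt (s.drop c) (s.drop x)

theorem IsLeastSuffixOn.eq_of_mem [Std.Asymm lt] {s : List α} {I J : Set ℕ} {c d : ℕ}
    (hc : IsLeastSuffixOn lt s I c) (hd : IsLeastSuffixOn lt s J d) (hdI : d ∈ I)
    (hcJ : c ∈ J) : c = d := by
  by_contra hne
  exact asymm (hc d hdI (Ne.symm hne)) (hd c hcJ hne)

theorem append_self_eq_take_append_rotate_append {w : List α} {r : ℕ} (hr : r ≤ w.length) :
    w ++ w = w.take r ++ w.rotate r ++ w.drop r := by
  rw [rotate_eq_drop_append_take hr]; conv_lhs => rw [← take_append_drop r w]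
  simp only [append_assoc]

theorem rotate_prefix_drop_add {s w rest : List α} {o r : ℕ} (hs : s.drop o = w ++ w ++ rest)
    (hr : r ≤ w.length) : w.rotate r <+: s.drop (o + r) := by
  rw [← drop_drop, hs, append_self_eq_take_append_rotate_append hr, append_assoc, append_assoc,
    drop_left' (length_take_of_le hr)]
  exact prefix_append _ _

theorem isLeastSuffixOn_of_isLyndonRel {s X l rest : List α} {o : ℕ} (hl : IsLyndonRel lt l)
    (hX : X <:+ l) (hXl : X ≠ l) (hs : s.drop o = X ++ l ++ rest) :
    IsLeastSuffixOn lt s (Set.Ico o (o + X.length + l.length)) (o + X.length) := by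
  have hXlen := hX.isInfix.length_lt_of_ne hXl
  have hdrop : ∀ k ≤ X.length + l.length, s.drop (o + k) = (X ++ l).drop k ++ rest :=
    fun k hk => by rw [← drop_drop, hs, drop_append_of_le_length (by simpa using hk)]
  rintro x ⟨hox, hx⟩ hxc
  obtain ⟨k, rfl⟩ := Nat.exists_eq_add_of_le hox
  rw [hdrop _ (by omega), hdrop _ (by omega), drop_left]
  rcases Nat.lt_or_gt_of_ne hxc with hk | hk
  · rw [drop_append_of_le_length (by omega), append_assoc]
    refine hl.lex_append_append ((drop_suffix k X).trans hX) ?_ ?_ _ _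
    · exact ne_nil_of_length_pos (by simp; omega)
    · intro h; have := congrArg length h; simp at this; omega
  · rw [drop_append, drop_eq_nil_of_le (by omega), nil_append]
    refine hl.lex_append_append (drop_suffix _ l) ?_ ?_ _ _
    · exact ne_nil_of_length_pos (by simp; omega)
    · intro h; have := congrArg length h; simp at this; omega

theorem isLeastSuffixOn_of_isLyndonRel_rotate {s w rest : List α} {o r : ℕ}
    (hl : IsLyndonRel lt (w.rotate r)) (hr : r < w.length) (hs : s.drop o = w ++ w ++ rest) :
    IsLeastSuffixOn lt s (Set.Ico o (o + r + w.length)) (o + r) := by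
  have hs' : s.drop o = w.take r ++ w.rotate r ++ (w.drop r ++ rest) := by
    rw [hs, append_self_eq_take_append_rotate_append hr.le, append_assoc]
  have hX : w.take r <:+ w.rotate r := rotate_eq_drop_append_take hr.le ▸ suffix_append _ _
  have hXl : w.take r ≠ w.rotate r := fun h => by
    have := congrArg length h; simp at this; omega
  simpa [length_take, Nat.min_eq_left hr.le] using isLeastSuffixOn_of_isLyndonRel hl hX hXl hs'

theorem isLeastSuffixOn_of_isLeastPeriod_append_self {s x l X Y rest : List α} {o p k : ℕ}
    (hp : IsLeastPeriod (x ++ x) p) (hl : IsLyndonRel lt l) (hlp : l.length = p)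
    (hX : X <:+ l) (hXl : X ≠ l) (hY : Y <+: l) (hx : x ++ x = X ++ listPow l k ++ Y)
    (hs : s.drop o = x ++ x ++ rest) :
    IsLeastSuffixOn lt s (Set.Ico o (o + X.length + p)) (o + X.length) := by
  obtain ⟨k, rfl⟩ : ∃ k', k = k' + 1 := by
    refine Nat.exists_eq_add_one.2 (Nat.pos_of_ne_zero fun hk => ?_)
    have hlen := congrArg length hx
    have := hX.isInfix.length_lt_of_ne hXl
    have := hY.length_le
    have := hp.le_length_of_append_self
    simp [hk, listPow] at hlen; omega
  rw [← hlp]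
  refine isLeastSuffixOn_of_isLyndonRel hl hX hXl (rest := listPow l k ++ Y ++ rest) ?_
  rw [hs, hx, listPow_succ]; simp

theorem lex_drop_add_of_isRun {s : List α} {i j p y : ℕ} (hrun : IsRun s i j p)
    (hord : ∀ a b, s[j + 1]? = some a → s[j + 1 - p]? = some b → lt a b)
    (hiy : i ≤ y) (hyj : y + p ≤ j + 1) : Lex lt (s.drop (y + p)) (s.drop y) := by
  obtain ⟨hij, hjs, ⟨hper, -⟩, -, -, -⟩ := hrun
  set n := j + 1 - p - y
  have hseg : ∀ m < j + 1 - i, (seg s i (j + 1))[m]? = s[i + m]? := fun m hm => by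
    simp [seg, hm, getElem?_drop]
  have hcommon : (s.drop y).take n = (s.drop (y + p)).take n := by
    refine ext_getElem? fun m => ?_
    simp only [getElem?_take, getElem?_drop]
    split_ifs with hm
    · have := hper.2.2 (y - i + m) (by simp [seg]; omega)
      rwa [hseg _ (by omega), hseg _ (by omega), show i + (y - i + m) = y + m by omega,
        show i + (y - i + m + p) = y + p + m by omega] at this
    · rfl
  have hlast : Lex lt (s.drop (j + 1)) (s.drop (j + 1 - p)) := by
    have hp1 := hper.1
    rw [drop_eq_getElem_cons (show j + 1 - p < s.length by omega)]
    rcases Nat.lt_or_ge (j + 1) s.length with hj | hj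
    · rw [drop_eq_getElem_cons hj]
      exact .rel (hord _ _ (getElem?_eq_getElem hj) (getElem?_eq_getElem _))
    · rw [drop_eq_nil_of_le hj]
      exact .nil
  rw [← take_append_drop n (s.drop y), ← take_append_drop n (s.drop (y + p)), hcommon,
    drop_drop, drop_drop, show y + p + n = j + 1 by omega, show y + n = j + 1 - p by omega]
  exact Lex.append_left lt hlast _

theorem eq_and_eq_or_add_le_of_isLeastSuffixOn [Std.Asymm lt] {s : List α} {o t c e q W : ℕ}
    (hc : IsLeastSuffixOn lt s (Set.Ico o (c + e)) c)
    (hq : IsLeastSuffixOn lt s (Set.Ico t (q + W)) q)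
    (hdec : Lex lt (s.drop (q + W)) (s.drop q))
    (hoq : o ≤ q) (htc : t ≤ c) (hqc : q < c + e) (hWe : W ≤ e) :
    (c = q ∧ e = W) ∨ q + W ≤ c := by
  by_cases hcq : q + W ≤ c
  · exact Or.inr hcq
  obtain rfl : c = q := hc.eq_of_mem hq ⟨hoq, hqc⟩ ⟨htc, by omega⟩
  refine Or.inl ⟨rfl, le_antisymm (not_lt.1 fun hWe' => ?_) hWe⟩
  exact asymm (hc _ ⟨by omega, by omega⟩ (by omega)) hdec

theorem prefix_drop_add_length_of_append_self {s x rest l : List α} {o p : ℕ}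
    (hs : s.drop o = x ++ x ++ rest) (hop : o ≤ p) (hpl : p + l.length ≤ o + x.length)
    (hl : l <+: s.drop p) : l <+: s.drop (p + x.length) := by
  obtain ⟨k, rfl⟩ := Nat.exists_eq_add_of_le hop
  have h₁ : s.drop (o + k) = x.drop k ++ (x ++ rest) := by
    rw [← drop_drop, hs, append_assoc, drop_append_of_le_length (by omega)]
  have h₂ : s.drop (o + k + x.length) = x.drop k ++ rest := by
    rw [show o + k + x.length = o + (x.length + k) by omega, ← drop_drop, hs, append_assoc,
      ← drop_drop, drop_left, drop_append_of_le_length (by omega)]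
  rw [h₁] at hl
  rw [h₂]
  exact (prefix_of_prefix_length_le hl (prefix_append _ _) (by simp; omega)).trans
    (prefix_append _ _)

end Suffixes

section Squares
variable {α : Type*} {lt : α → α → Prop}

theorem add_le_of_isLeastSuffixOn_of_root [Std.Asymm lt] {s x l X Y rest : List α}
    {o p k t q W : ℕ} (hp : IsLeastPeriod (x ++ x) p) (hl : IsLyndonRel lt l) (hlp : l.length = p)
    (hX : X <:+ l) (hXl : X ≠ l) (hY : Y <+: l) (hx : x ++ x = X ++ listPow l k ++ Y)
    (hs : s.drop o = x ++ x ++ rest) (hq : IsLeastSuffixOn lt s (Set.Ico t (q + W)) q)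
    (hdec : Lex lt (s.drop (q + W)) (s.drop q)) (hoq : o ≤ q) (htX : t < o + X.length)
    (hqt : q < t + W) (hWp : W ≤ p) (hWx : W < x.length) : q + W ≤ o + x.length := by
  have hXp := hX.isInfix.length_lt_of_ne hXl
  have hpx := hp.le_length_of_append_self
  rcases eq_and_eq_or_add_le_of_isLeastSuffixOn
    (isLeastSuffixOn_of_isLeastPeriod_append_self hp hl hlp hX hXl hY hx hs) hq hdec hoq htX.le
    (by omega) hWp with ⟨hcq, rfl⟩ | hqc
  · -- the root starts at `q` and has length `W`, and `|x| > W` is a multiple of `W`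
    have := Nat.le_of_dvd (by omega) (Nat.dvd_sub hp.dvd_length_of_append_self dvd_rfl)
    omega
  · omega

theorem add_le_length_of_isLyndonRel_prefix [Std.Asymm lt] {u v B l : List α} {a q : ℕ}
    (hl : IsLyndonRel lt l) (hv : (u ++ u).drop a = v ++ v ++ B) (hq : l <+: (u ++ u).drop q)
    (haq : a ≤ q) (hqu : q + l.length ≤ u.length) (hqv : q + l.length ≤ a + v.length)
    (hvu : v.length < u.length) : v.length + l.length ≤ u.length := by
  by_contra! h
  have hu : (u ++ u).drop 0 = u ++ u ++ [] := by simp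
  refine hl.not_prefix_drop_add (d := u.length - v.length) (by omega) (by omega)
    (prefix_drop_add_length_of_append_self hv haq hqv hq) ?_
  rw [show q + v.length + (u.length - v.length) = q + u.length by omega]
  exact prefix_drop_add_length_of_append_self hu (Nat.zero_le _) (by omega) hq

end Squares

theorem generalized_three_squares_general {α : Type*} [LinearOrder α]
    (lt : α → α → Prop)
    (hlt : lt = (fun a b : α => a < b) ∨ lt = (fun a b : α => b < a))
    (u v w : List α) (hwne : w ≠ [])
    (A B : List α) (hvin : u ++ u = A ++ (v ++ v) ++ B) (hvproper : v ++ v ≠ u ++ u)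
    (C D : List α) (hwin : v ++ v = C ++ (w ++ w) ++ D) (hwproper : w ++ w ≠ v ++ v)
    (pu pv pw : ℕ)
    (hpu : IsLeastPeriod (u ++ u) pu) (hpv : IsLeastPeriod (v ++ v) pv)
    (hpw : IsLeastPeriod (w ++ w) pw)
    (i j : ℕ) (hrun : IsRun (u ++ u) i j pw)
    (hri : i ≤ A.length + C.length)
    (hrj : A.length + C.length + (w ++ w).length ≤ j + 1)
    (hord : ∀ a b : α, (u ++ u)[j + 1]? = some a → (u ++ u)[j + 1 - pw]? = some b →
      lt a b)
    (lu lv xu yu xv yv : List α) (ku kv : ℕ)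
    (hluL : IsLyndonRel lt lu) (hlul : lu.length = pu)
    (hlvL : IsLyndonRel lt lv) (hlvl : lv.length = pv)
    (hxu : xu <:+ lu) (hxune : xu ≠ lu) (hyu : yu <+: lu)
    (hxv : xv <:+ lv) (hxvne : xv ≠ lv) (hyv : yv <+: lv)
    (hdu : u ++ u = xu ++ listPow lu ku ++ yu)
    (hdv : v ++ v = xv ++ listPow lv kv ++ yv)
    (hw_before_u : A.length + C.length < xu.length)
    (hw_before_v : C.length < xv.length)
    (hwprim : IsPrimitiveWord w) :
    v.length + w.length ≤ u.length := by
  have : IsStrictTotalOrder α lt := by rcases hlt with rfl | rfl <;> infer_instance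
  have hvu := length_lt_of_append_self_eq hvin hvproper
  have hwv := length_lt_of_append_self_eq hwin hwproper
  obtain rfl : pw = w.length := hwprim.isLeastPeriod_append_self hpw
  have hsv : (u ++ u).drop A.length = v ++ v ++ B := by rw [hvin, append_assoc, drop_left]
  have hsw : (u ++ u).drop (A.length + C.length) = w ++ w ++ (D ++ B) := by
    rw [← drop_drop, hsv, hwin]; simp
  obtain ⟨r, hr, hlyn⟩ := hwprim.exists_isLyndonRel_rotate (lt := lt) hwne
  have hL := isLeastSuffixOn_of_isLyndonRel_rotate hlyn hr hsw
  have hdec := lex_drop_add_of_isRun hrun hord (y := A.length + C.length + r) (by omega)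
    (by simp at hrj; omega)
  have hqu := add_le_of_isLeastSuffixOn_of_root (o := 0) (rest := []) hpu hluL hlul hxu hxune hyu
    hdu (by simp) hL hdec (by omega) (by omega) (by omega)
    (hpw.le_of_isInfix ⟨A ++ C, D ++ B, by rw [hvin, hwin]; simp⟩ hpu.1) (by omega)
  have hqv := add_le_of_isLeastSuffixOn_of_root hpv hlvL hlvl hxv hxvne hyv hdv hsv hL hdec
    (by omega) (by omega) (by omega) (hpw.le_of_isInfix ⟨C, D, hwin.symm⟩ hpv.1) hwv
  simpa using add_le_length_of_isLyndonRel_prefix hlyn hsv (rotate_prefix_drop_add hsw hr.le)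
    (by omega) (by simpa using hqu) (by simpa using hqv) hvu

/-- Generalized three squares lemma.  Let `u²`, `v²`, `w²` be squares with `w`
primitive, where `v² ` is a proper substring of `u²` (via `u² = A · v² · B`)
starting strictly before the L-root interval `r_{u²} = λᵤ^kᵤ` of `u²`, and `w²` is a
proper substring of `v²` (via `v² = C · w² · D`) starting strictly before both
`r_{u²}` and `r_{v²} = λᵥ^kᵥ`.  Here the L-root intervals are taken with respect to
the lexicographic order `lt` of `w²`, i.e. `lt` is one of the two lexicographic
orders and, for the run `(u²)[i..j]` with the same smallest period `pw` containing
the occurrence of `w²`, we have `(u²)[j+1] lt (u²)[j+1-pw]` whenever position `j+1`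
exists.  Then `|u| ≥ |v| + |w|`. -/
theorem generalized_three_squares {α : Type*} [LinearOrder α]
    (lt : α → α → Prop)
    (hlt : lt = (fun a b : α => a < b) ∨ lt = (fun a b : α => b < a))
    (u v w : List α) (hune : u ≠ []) (hvne : v ≠ []) (hwne : w ≠ [])
    (A B : List α) (hvin : u ++ u = A ++ (v ++ v) ++ B) (hvproper : v ++ v ≠ u ++ u)
    (C D : List α) (hwin : v ++ v = C ++ (w ++ w) ++ D) (hwproper : w ++ w ≠ v ++ v)
    (pu pv pw : ℕ)
    (hpu : IsLeastPeriod (u ++ u) pu) (hpv : IsLeastPeriod (v ++ v) pv)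
    (hpw : IsLeastPeriod (w ++ w) pw)
    (i j : ℕ) (hrun : IsRun (u ++ u) i j pw)
    (hri : i ≤ A.length + C.length)
    (hrj : A.length + C.length + (w ++ w).length ≤ j + 1)
    (hord : ∀ a b : α, (u ++ u)[j + 1]? = some a → (u ++ u)[j + 1 - pw]? = some b →
      lt a b)
    (lu lv xu yu xv yv : List α) (ku kv : ℕ)
    (hluL : IsLyndonRel lt lu) (hlul : lu.length = pu)
    (hlvL : IsLyndonRel lt lv) (hlvl : lv.length = pv)
    (hxu : xu <:+ lu) (hxune : xu ≠ lu) (hyu : yu <+: lu) (hyune : yu ≠ lu)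
    (hxv : xv <:+ lv) (hxvne : xv ≠ lv) (hyv : yv <+: lv) (hyvne : yv ≠ lv)
    (hdu : u ++ u = xu ++ listPow lu ku ++ yu)
    (hdv : v ++ v = xv ++ listPow lv kv ++ yv)
    (hv_before : A.length < xu.length)
    (hw_before_u : A.length + C.length < xu.length)
    (hw_before_v : C.length < xv.length)
    (hwprim : IsPrimitiveWord w) :
    v.length + w.length ≤ u.length :=
  generalized_three_squares_general lt hlt u v w hwne A B hvin hvproper C D hwin hwproper pu pv pw
    hpu hpv hpw i j hrun hri hrj hord lu lv xu yu xv yv ku kv hluL hlul hlvL hlvl hxu hxune hyu hxv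
    hxvne hyv hdu hdv hw_before_u hw_before_v hwprim
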